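/- Let p ∈ frontier Z. Suppose there exist an open neighborhood U of p, ρ > 0, and a function a : ℝ → ℝ that is continuous and strictly positive on (0, ρ] with t ↦ (a t)⁻¹ Lebesgue integrable on (0, ρ), such that ‖∇f x‖ ≥ a (f x) for every x ∈ U with 0 < f x ≤ ρ. Then p is KŁ nondegenerate; indeed, the function Ψ t := ∫ r in (0, t), (a r)⁻¹ satisfies Ψ 0 = 0, is continuous on [0, ρ], is differentiable on (0, ρ) with deriv Ψ t = (a t)⁻¹ > 0 and deriv Ψ continuous there, and deriv Ψ (f x) * ‖∇f x‖ ≥ 1 for every x ∈ U with 0 < f x < ρ. -/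

import Mathlib

/-! By the fundamental theorem of calculus on `(0, ρ)`, `Ψ t = ∫ r in (0, t), (a r)⁻¹` is a
primitive of `1 / a` there, continuous up to `0` because `1 / a` is integrable. Hence
`Ψ' (f x) * ‖∇f x‖ = ‖∇f x‖ / a (f x) ≥ 1` is exactly the assumed gradient inequality. -/

open Set MeasureTheory

variable {n : ℕ}

def KLNondeg (f : EuclideanSpace ℝ (Fin n) → ℝ) (p : EuclideanSpace ℝ (Fin n)) : Prop :=
  ∃ ρ > (0:ℝ), ∃ U : Set (EuclideanSpace ℝ (Fin n)), IsOpen U ∧ p ∈ U ∧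
    ∃ Ψ : ℝ → ℝ, Ψ 0 = 0 ∧ ContinuousOn Ψ (Ico 0 ρ) ∧
      (∀ t ∈ Ioo (0:ℝ) ρ, DifferentiableAt ℝ Ψ t) ∧
      (∀ t ∈ Ioo (0:ℝ) ρ, 0 < deriv Ψ t) ∧
      ContinuousOn (deriv Ψ) (Ioo 0 ρ) ∧
      ∀ x ∈ U, 0 < f x → f x < ρ → 1 ≤ deriv Ψ (f x) * ‖gradient f x‖

section PrimitiveOnIoo

variable {E : Type*} [NormedAddCommGroup E] [NormedSpace ℝ E] {g : ℝ → E} {c d : ℝ}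

theorem integral_Ioo_eq_intervalIntegral {t : ℝ} (hct : c ≤ t) :
    ∫ r in Ioo c t, g r = ∫ r in c..t, g r := by
  rw [← integral_Ioc_eq_integral_Ioo, intervalIntegral.integral_of_le hct]

theorem continuousOn_integral_Ioo (hg : IntegrableOn g (Ioo c d)) :
    ContinuousOn (fun t => ∫ r in Ioo c t, g r) (Icc c d) := by
  simp_rw [← integral_Ioc_eq_integral_Ioo]
  exact intervalIntegral.continuousOn_primitive ((integrableOn_Icc_iff_integrableOn_Ioo).2 hg)

variable [CompleteSpace E]

theorem hasDerivAt_integral_Ioo (hg : IntegrableOn g (Ioo c d))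
    (hg_cont : ContinuousOn g (Ioo c d)) {t : ℝ} (ht : t ∈ Ioo c d) :
    HasDerivAt (fun u => ∫ r in Ioo c u, g r) (g t) t := by
  have hg_int : IntervalIntegrable g volume c t :=
    (intervalIntegrable_iff_integrableOn_Ioc_of_le ht.1.le).2
      (hg.mono_set fun r hr => ⟨hr.1, hr.2.trans_lt ht.2⟩)
  have hprimitive : HasDerivAt (fun u => ∫ r in c..u, g r) (g t) t :=
    intervalIntegral.integral_hasDerivAt_right hg_int
      (hg_cont.stronglyMeasurableAtFilter isOpen_Ioo t ht)
      (hg_cont.continuousAt (isOpen_Ioo.mem_nhds ht))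
  refine hprimitive.congr_of_eventuallyEq ?_
  filter_upwards [isOpen_Ioi.mem_nhds ht.1] with u hu
  exact integral_Ioo_eq_intervalIntegral (le_of_lt hu)

theorem deriv_integral_Ioo_eqOn (hg : IntegrableOn g (Ioo c d))
    (hg_cont : ContinuousOn g (Ioo c d)) :
    EqOn (deriv fun u => ∫ r in Ioo c u, g r) g (Ioo c d) :=
  fun _ ht => (hasDerivAt_integral_Ioo hg hg_cont ht).deriv

end PrimitiveOnIoo

theorem gradient_inequality_implies_KL_general (n : ℕ)
    (f : EuclideanSpace ℝ (Fin n) → ℝ)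
    (p : EuclideanSpace ℝ (Fin n))
    (U : Set (EuclideanSpace ℝ (Fin n))) (hU : IsOpen U) (hpU : p ∈ U)
    (ρ : ℝ) (hρ : 0 < ρ)
    (a : ℝ → ℝ) (ha_cont : ContinuousOn a (Ioc 0 ρ))
    (ha_pos : ∀ t ∈ Ioc (0:ℝ) ρ, 0 < a t)
    (ha_int : IntegrableOn (fun t => (a t)⁻¹) (Ioo 0 ρ))
    (hgrad : ∀ x ∈ U, 0 < f x → f x ≤ ρ → a (f x) ≤ ‖gradient f x‖) :
    (fun t => ∫ r in Ioo (0:ℝ) t, (a r)⁻¹) 0 = 0 ∧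
    ContinuousOn (fun t => ∫ r in Ioo (0:ℝ) t, (a r)⁻¹) (Icc 0 ρ) ∧
    (∀ t ∈ Ioo (0:ℝ) ρ,
        DifferentiableAt ℝ (fun t => ∫ r in Ioo (0:ℝ) t, (a r)⁻¹) t ∧
        deriv (fun t => ∫ r in Ioo (0:ℝ) t, (a r)⁻¹) t = (a t)⁻¹ ∧
        0 < deriv (fun t => ∫ r in Ioo (0:ℝ) t, (a r)⁻¹) t) ∧
    ContinuousOn (deriv (fun t => ∫ r in Ioo (0:ℝ) t, (a r)⁻¹)) (Ioo 0 ρ) ∧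
    (∀ x ∈ U, 0 < f x → f x < ρ →
        1 ≤ deriv (fun t => ∫ r in Ioo (0:ℝ) t, (a r)⁻¹) (f x) * ‖gradient f x‖) ∧
    KLNondeg f p := by
  set Ψ : ℝ → ℝ := fun t => ∫ r in Ioo (0:ℝ) t, (a r)⁻¹
  have ha_ne : ∀ t ∈ Ioo (0:ℝ) ρ, a t ≠ 0 := fun t ht => (ha_pos t (Ioo_subset_Ioc_self ht)).ne'
  have ha_inv_cont : ContinuousOn (fun t => (a t)⁻¹) (Ioo 0 ρ) :=
    (ha_cont.mono Ioo_subset_Ioc_self).inv₀ ha_ne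
  have hΨ0 : Ψ 0 = 0 := by simp [Ψ]
  have hΨ_cont : ContinuousOn Ψ (Icc 0 ρ) := continuousOn_integral_Ioo ha_int
  have hΨ' := deriv_integral_Ioo_eqOn ha_int ha_inv_cont
  have hΨ_diff : ∀ t ∈ Ioo (0:ℝ) ρ,
      DifferentiableAt ℝ Ψ t ∧ deriv Ψ t = (a t)⁻¹ ∧ 0 < deriv Ψ t := fun t ht =>
    ⟨(hasDerivAt_integral_Ioo ha_int ha_inv_cont ht).differentiableAt, hΨ' ht,
      hΨ' ht ▸ inv_pos.2 (ha_pos t (Ioo_subset_Ioc_self ht))⟩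
  have hΨ'_cont : ContinuousOn (deriv Ψ) (Ioo 0 ρ) := ha_inv_cont.congr hΨ'
  have hKL : ∀ x ∈ U, 0 < f x → f x < ρ → 1 ≤ deriv Ψ (f x) * ‖gradient f x‖ := by
    intro x hx hfx hfxρ
    rw [hΨ' ⟨hfx, hfxρ⟩, inv_mul_eq_div, one_le_div (ha_pos _ ⟨hfx, hfxρ.le⟩)]
    exact hgrad x hx hfx hfxρ.le
  exact ⟨hΨ0, hΨ_cont, hΨ_diff, hΨ'_cont, hKL, ρ, hρ, U, hU, hpU, Ψ, hΨ0,
    hΨ_cont.mono Ico_subset_Icc_self, fun t ht => (hΨ_diff t ht).1,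
    fun t ht => (hΨ_diff t ht).2.2, hΨ'_cont, hKL⟩

theorem gradient_inequality_implies_KL (n : ℕ) (hn : 1 ≤ n)
    (f : EuclideanSpace ℝ (Fin n) → ℝ)
    (hf : Continuous f) (hf0 : ∀ x, 0 ≤ f x)
    (hZ : (f ⁻¹' {0}).Nonempty)
    (hC1 : ContDiffOn ℝ 1 f (f ⁻¹' {0})ᶜ)
    (p : EuclideanSpace ℝ (Fin n)) (hp : p ∈ frontier (f ⁻¹' {0}))
    (U : Set (EuclideanSpace ℝ (Fin n))) (hU : IsOpen U) (hpU : p ∈ U)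
    (ρ : ℝ) (hρ : 0 < ρ)
    (a : ℝ → ℝ) (ha_cont : ContinuousOn a (Ioc 0 ρ))
    (ha_pos : ∀ t ∈ Ioc (0:ℝ) ρ, 0 < a t)
    (ha_int : IntegrableOn (fun t => (a t)⁻¹) (Ioo 0 ρ))
    (hgrad : ∀ x ∈ U, 0 < f x → f x ≤ ρ → a (f x) ≤ ‖gradient f x‖) :
    (fun t => ∫ r in Ioo (0:ℝ) t, (a r)⁻¹) 0 = 0 ∧
    ContinuousOn (fun t => ∫ r in Ioo (0:ℝ) t, (a r)⁻¹) (Icc 0 ρ) ∧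
    (∀ t ∈ Ioo (0:ℝ) ρ,
        DifferentiableAt ℝ (fun t => ∫ r in Ioo (0:ℝ) t, (a r)⁻¹) t ∧
        deriv (fun t => ∫ r in Ioo (0:ℝ) t, (a r)⁻¹) t = (a t)⁻¹ ∧
        0 < deriv (fun t => ∫ r in Ioo (0:ℝ) t, (a r)⁻¹) t) ∧
    ContinuousOn (deriv (fun t => ∫ r in Ioo (0:ℝ) t, (a r)⁻¹)) (Ioo 0 ρ) ∧
    (∀ x ∈ U, 0 < f x → f x < ρ →
        1 ≤ deriv (fun t => ∫ r in Ioo (0:ℝ) t, (a r)⁻¹) (f x) * ‖gradient f x‖) ∧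
    KLNondeg f p :=
  gradient_inequality_implies_KL_general n f p U hU hpU ρ hρ a ha_cont ha_pos ha_int hgrad
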